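/- arXiv:2105.00767 — 4 statements merged into one kernel-verified Lean document; each statement's English description precedes it below -/
import Mathlib

section
/- Suppose g : [0,1]^{N×M} → [0,1]^{N×M} is a ‖·‖_∞-contraction with constant C₁ < 1 and fixed point s̄ (g(s̄) = s̄), and suppose η > 0. If s : [0,∞) → [0,1]^{N×M} is differentiable and satisfies the ODE d s(t)^i(j)/dt = σ(s(t)^i, j)·(g(s(t))^i(j) − s(t)^i(j)) for all t ≥ 0 and all i, j, then ‖s(t) − s̄‖_∞ ≤ ‖s(0) − s̄‖_∞ · exp(−(η/M)(1 − C₁)·t) for all t ≥ 0. In particular s̄ is a global attractor of the ODE on [0,1]^{N×M}, and solutions converge to s̄ at an exponential rate. -/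
open Finset

/-- The Hedge stationary policy. -/
noncomputable def hedge (β η : ℝ) {M : ℕ} (s : Fin M → ℝ) (j : Fin M) : ℝ :=
  (1 - η) * Real.exp (β * s j) / (∑ k, Real.exp (β * s k)) + η / M

/-- One-sided eventual bound from a derivative condition. -/
lemma one_sided_aux {x : ℝ → ℝ} {t F r' d : ℝ} (hd : HasDerivAt x d t)
    (hxt : x t ≤ F) (hdr : x t = F → d < r') :
    ∀ᶠ z in nhdsWithin t (Set.Ioi t), x z ≤ F + r' * (z - t) := by
  rcases eq_or_lt_of_le hxt with heq | hlt
  · have hs : Filter.Tendsto (slope x t) (nhdsWithin t {t}ᶜ) (nhds d) :=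
      hasDerivAt_iff_tendsto_slope.1 hd
    have hs' : Filter.Tendsto (slope x t) (nhdsWithin t (Set.Ioi t)) (nhds d) :=
      hs.mono_left (nhdsWithin_mono t (fun z hz => ne_of_gt hz))
    have hev := hs'.eventually_lt_const (hdr heq)
    filter_upwards [hev, self_mem_nhdsWithin] with z hz hz'
    have hzt : (0 : ℝ) < z - t := sub_pos.2 hz'
    rw [slope_def_field, div_lt_iff₀ hzt] at hz
    nlinarith
  · have hc : Filter.Tendsto (fun z => F + r' * (z - t) - x z) (nhds t)
        (nhds (F + r' * (t - t) - x t)) := by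
      exact ((continuousAt_const.add ((continuousAt_const.mul
        (continuousAt_id.sub continuousAt_const)))).sub hd.continuousAt)
    have h0 : (0 : ℝ) < F + r' * (t - t) - x t := by simp; linarith
    have hev := hc.eventually_const_lt h0
    filter_upwards [hev.filter_mono nhdsWithin_le_nhds] with z hz
    linarith

/-- The sup norm on a doubly-indexed pi type is attained. -/
lemma exists_coord {N M : ℕ} (hN : 1 ≤ N) (hM : 1 ≤ M) (y : Fin N → Fin M → ℝ) :
    ∃ i j, ‖y‖ = |y i j| := by
  have hNne : Nonempty (Fin N) := ⟨⟨0, hN⟩⟩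
  have hMne : Nonempty (Fin M) := ⟨⟨0, hM⟩⟩
  obtain ⟨i, -, hi⟩ := Finset.exists_mem_eq_sup (Finset.univ : Finset (Fin N))
    Finset.univ_nonempty (fun i => ‖y i‖₊)
  obtain ⟨j, -, hj⟩ := Finset.exists_mem_eq_sup (Finset.univ : Finset (Fin M))
    Finset.univ_nonempty (fun j => ‖y i j‖₊)
  refine ⟨i, j, ?_⟩
  have h1 : ‖y‖ = ‖y i‖ := by
    rw [Pi.norm_def, hi, coe_nnnorm]
  have h2 : ‖y i‖ = ‖y i j‖ := by
    rw [Pi.norm_def, hj, coe_nnnorm]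
  rw [h1, h2, Real.norm_eq_abs]

lemma abs_coord_le {N M : ℕ} (y : Fin N → Fin M → ℝ) (i : Fin N) (j : Fin M) :
    |y i j| ≤ ‖y‖ := by
  calc |y i j| = ‖y i j‖ := (Real.norm_eq_abs _).symm
    _ ≤ ‖y i‖ := norm_le_pi_norm (y i) j
    _ ≤ ‖y‖ := norm_le_pi_norm y i

/-- exponential convergence of solutions of the mean field ODE
`d s(t)^i(j)/dt = σ(s(t)^i,j)·(g(s(t))^i(j) − s(t)^i(j))` to the fixed point `s̄` of
the `‖·‖_∞`-contraction `g`: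
`‖s(t) − s̄‖_∞ ≤ ‖s(0) − s̄‖_∞ · exp(−(η/M)(1−C₁)t)` for all `t ≥ 0`. -/
theorem ode_exponential_convergence {N M : ℕ} (hN : 1 ≤ N) (hM : 1 ≤ M)
    (β η : ℝ) (hβ : 0 < β) (hη : η ∈ Set.Icc (0 : ℝ) 1) (hη0 : 0 < η)
    (g : (Fin N → Fin M → ℝ) → Fin N → Fin M → ℝ)
    (hg_box : ∀ s : Fin N → Fin M → ℝ, (∀ i j, s i j ∈ Set.Icc (0 : ℝ) 1) →
      ∀ i j, g s i j ∈ Set.Icc (0 : ℝ) 1)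
    (C₁ : ℝ) (hC₁0 : 0 ≤ C₁) (hC₁ : C₁ < 1)
    (hg_contr : ∀ s s' : Fin N → Fin M → ℝ,
      (∀ i j, s i j ∈ Set.Icc (0 : ℝ) 1) → (∀ i j, s' i j ∈ Set.Icc (0 : ℝ) 1) →
      ‖g s - g s'‖ ≤ C₁ * ‖s - s'‖)
    (sbar : Fin N → Fin M → ℝ)
    (hsbar_box : ∀ i j, sbar i j ∈ Set.Icc (0 : ℝ) 1)
    (hsbar_fix : g sbar = sbar)
    (s : ℝ → Fin N → Fin M → ℝ)
    (hs_box : ∀ t : ℝ, 0 ≤ t → ∀ i j, s t i j ∈ Set.Icc (0 : ℝ) 1)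
    (hs_ode : ∀ t : ℝ, 0 ≤ t → ∀ i j,
      HasDerivAt (fun u => s u i j)
        (hedge β η (s t i) j * (g (s t) i j - s t i j)) t) :
    ∀ t : ℝ, 0 ≤ t →
      ‖s t - sbar‖ ≤ ‖s 0 - sbar‖ * Real.exp (-(η / M) * (1 - C₁) * t) := by
  intro T hT
  set K : ℝ := -(η / M * (1 - C₁)) with hK
  clear_value K
  have hM0 : (0 : ℝ) < M := by exact_mod_cast hM
  have hηM : (0 : ℝ) < η / M := div_pos hη0 hM0
  -- continuity of f
  have hcont : ContinuousOn (fun t => ‖s t - sbar‖) (Set.Icc 0 T) := by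
    intro t ht
    have hca : ContinuousAt (fun u => s u - sbar) t := by
      refine continuousAt_pi.2 fun i => continuousAt_pi.2 fun j => ?_
      exact (hs_ode t ht.1 i j).continuousAt.sub continuousAt_const
    exact (hca.norm).continuousWithinAt
  -- the key Dini-derivative estimate
  have hf' : ∀ t ∈ Set.Ico (0 : ℝ) T, ∀ r, K * ‖s t - sbar‖ < r →
      ∃ᶠ z in nhdsWithin t (Set.Ioi t),
        (z - t)⁻¹ * (‖s z - sbar‖ - ‖s t - sbar‖) < r := by
    intro t ht r hr
    set F : ℝ := ‖s t - sbar‖ with hF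
    clear_value F
    have hF0 : 0 ≤ F := by rw [hF]; exact norm_nonneg _
    obtain ⟨r', hr1, hr2⟩ := exists_between hr
    -- coordinatewise facts
    have hcontr : ‖g (s t) - sbar‖ ≤ C₁ * F := by
      have := hg_contr (s t) sbar (hs_box t ht.1) hsbar_box
      rwa [hsbar_fix, ← hF] at this
    have key : ∀ i j, ∀ᶠ z in nhdsWithin t (Set.Ioi t),
        s z i j - sbar i j ≤ F + r' * (z - t) ∧
        -(s z i j - sbar i j) ≤ F + r' * (z - t) := by
      intro i j
      have hw : |g (s t) i j - sbar i j| ≤ C₁ * F :=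
        le_trans (abs_coord_le (g (s t) - sbar) i j) hcontr
      have hx : |s t i j - sbar i j| ≤ F := by
        rw [hF]; exact abs_coord_le (s t - sbar) i j
      have hσ : η / M ≤ hedge β η (s t i) j := by
        have hsum : 0 < ∑ k, Real.exp (β * s t i k) :=
          Finset.sum_pos (fun k _ => Real.exp_pos _)
            (@Finset.univ_nonempty (Fin M) _ ⟨⟨0, hM⟩⟩)
        have h1 : 0 ≤ (1 - η) * Real.exp (β * s t i j) / (∑ k, Real.exp (β * s t i k)) :=
          div_nonneg (mul_nonneg (by linarith [hη.2]) (Real.exp_pos _).le) hsum.le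
        unfold hedge
        linarith
      have hd : HasDerivAt (fun u => s u i j - sbar i j)
          (hedge β η (s t i) j * (g (s t) i j - s t i j)) t :=
        (hs_ode t ht.1 i j).sub_const _
      have hderiv_bound : ∀ c : ℝ, c ≤ 0 →
          hedge β η (s t i) j * c ≤ η / M * c := by
        intro c hc
        exact mul_le_mul_of_nonpos_right hσ hc
      have hP : ∀ᶠ z in nhdsWithin t (Set.Ioi t),
          s z i j - sbar i j ≤ F + r' * (z - t) := by
        refine one_sided_aux hd (le_trans (le_abs_self _) hx) (fun heq => ?_)
        have hc : g (s t) i j - s t i j ≤ (C₁ - 1) * F := by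
          have : g (s t) i j - sbar i j ≤ C₁ * F := le_trans (le_abs_self _) hw
          nlinarith [abs_nonneg (g (s t) i j - sbar i j)]
        have hc0 : g (s t) i j - s t i j ≤ 0 := by nlinarith
        have := hderiv_bound _ hc0
        have h2 : η / M * (g (s t) i j - s t i j) ≤ η / M * ((C₁ - 1) * F) :=
          mul_le_mul_of_nonneg_left hc hηM.le
        have h3 : η / M * ((C₁ - 1) * F) = K * F := by rw [hK]; ring
        linarith
      have hQ : ∀ᶠ z in nhdsWithin t (Set.Ioi t),
          -(s z i j - sbar i j) ≤ F + r' * (z - t) := by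
        refine one_sided_aux hd.neg (le_trans (neg_le_abs _) hx) (fun heq => ?_)
        have hc : -(g (s t) i j - s t i j) ≤ (C₁ - 1) * F := by
          have : -(g (s t) i j - sbar i j) ≤ C₁ * F := le_trans (neg_le_abs _) hw
          nlinarith
        have hc0 : g (s t) i j - s t i j ≥ 0 := by nlinarith
        have h1 : -(hedge β η (s t i) j * (g (s t) i j - s t i j))
            = hedge β η (s t i) j * (-(g (s t) i j - s t i j)) := by ring
        have h2 := hderiv_bound _ (by linarith : -(g (s t) i j - s t i j) ≤ 0)
        have h3 : η / M * (-(g (s t) i j - s t i j)) ≤ η / M * ((C₁ - 1) * F) :=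
          mul_le_mul_of_nonneg_left hc hηM.le
        have h4 : η / M * ((C₁ - 1) * F) = K * F := by rw [hK]; ring
        rw [h1]
        linarith
      exact hP.and hQ
    have ev : ∀ᶠ z in nhdsWithin t (Set.Ioi t), ∀ i j,
        s z i j - sbar i j ≤ F + r' * (z - t) ∧
        -(s z i j - sbar i j) ≤ F + r' * (z - t) :=
      Filter.eventually_all.2 fun i => Filter.eventually_all.2 fun j => key i j
    refine Filter.Eventually.frequently ?_
    filter_upwards [ev, self_mem_nhdsWithin] with z hz hz'
    have hzt : (0 : ℝ) < z - t := sub_pos.2 hz'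
    obtain ⟨i, j, hij⟩ := exists_coord hN hM (s z - sbar)
    have hzij : |s z i j - sbar i j| ≤ F + r' * (z - t) :=
      abs_le.2 ⟨by linarith [(hz i j).2], (hz i j).1⟩
    have hnorm : ‖s z - sbar‖ ≤ F + r' * (z - t) := by
      rw [hij]; exact hzij
    rw [show (z - t)⁻¹ * (‖s z - sbar‖ - F) = (‖s z - sbar‖ - F) / (z - t) from
      (div_eq_inv_mul _ _).symm, div_lt_iff₀ hzt]
    nlinarith
  have bound : ∀ t ∈ Set.Ico (0 : ℝ) T,
      K * ‖s t - sbar‖ ≤ K * ‖s t - sbar‖ + 0 := fun t _ => by linarith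
  have key := le_gronwallBound_of_liminf_deriv_right_le
    (f := fun t => ‖s t - sbar‖) (f' := fun t => K * ‖s t - sbar‖)
    (δ := ‖s 0 - sbar‖) (K := K) (ε := 0) (a := 0) (b := T)
    hcont hf' le_rfl bound T ⟨hT, le_rfl⟩
  rw [gronwallBound_ε0] at key
  have : K * (T - 0) = -(η / ↑M) * (1 - C₁) * T := by rw [hK]; ring
  rwa [this] at key
end

section
/- Suppose g : [0,1]^{N×M} → [0,1]^{N×M} is a ‖·‖_∞-contraction with constant C₁ < 1 and fixed point s̄, and suppose η > 0. Define the expected-update map w by w(s)^i(j) = σ(s^i, j)·g(s)^i(j) + (1 − σ(s^i, j))·s^i(j). Then for every s ∈ [0,1]^{N×M}, ‖w(s) − s̄‖_∞ ≤ C·‖s − s̄‖_∞ with C = 1 − (η/M)(1 − C₁), and 0 ≤ C < 1. -/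
open Finset

/-- Expected one-step update map
`w(s)^i(j) = σ(s^i,j)·g(s)^i(j) + (1 − σ(s^i,j))·s^i(j)`. -/
noncomputable def expUpdate {N M : ℕ} (β η : ℝ)
    (g : (Fin N → Fin M → ℝ) → Fin N → Fin M → ℝ)
    (s : Fin N → Fin M → ℝ) : Fin N → Fin M → ℝ :=
  fun i j => hedge β η (s i) j * g s i j + (1 - hedge β η (s i) j) * s i j

lemma hedge_bounds {M : ℕ} (hM : 1 ≤ M) (β η : ℝ) (hη0 : 0 ≤ η) (hη1 : η ≤ 1)
    (s : Fin M → ℝ) (j : Fin M) :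
    η / M ≤ hedge β η s j ∧ hedge β η s j ≤ 1 := by
  have hne : (Finset.univ : Finset (Fin M)).Nonempty := by
    haveI : NeZero M := ⟨by omega⟩
    exact Finset.univ_nonempty
  have hS : 0 < ∑ k, Real.exp (β * s k) :=
    Finset.sum_pos (fun k _ => Real.exp_pos _) hne
  have hterm : 0 ≤ (1 - η) * Real.exp (β * s j) / (∑ k, Real.exp (β * s k)) :=
    div_nonneg (mul_nonneg (by linarith) (Real.exp_pos _).le) hS.le
  have hle : Real.exp (β * s j) ≤ ∑ k, Real.exp (β * s k) :=
    Finset.single_le_sum (f := fun k => Real.exp (β * s k)) (fun k _ => (Real.exp_pos _).le) (Finset.mem_univ j)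
  have hM1 : (1 : ℝ) ≤ M := by exact_mod_cast hM
  constructor
  · unfold hedge; linarith
  · have htop : (1 - η) * Real.exp (β * s j) / (∑ k, Real.exp (β * s k)) ≤ 1 - η := by
      rw [div_le_iff₀ hS]
      nlinarith [Real.exp_pos (β * s j)]
    have : η / M ≤ η := div_le_self hη0 hM1
    unfold hedge; linarith

/-- the expected-update map `w` contracts towards the fixed point `s̄`
of `g` with constant `C = 1 − (η/M)(1 − C₁)`, and `0 ≤ C < 1`. -/
theorem expected_update_contraction {N M : ℕ} (hN : 1 ≤ N) (hM : 1 ≤ M)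
    (β η : ℝ) (hβ : 0 < β) (hη : η ∈ Set.Icc (0 : ℝ) 1) (hη0 : 0 < η)
    (g : (Fin N → Fin M → ℝ) → Fin N → Fin M → ℝ)
    (hg_box : ∀ s : Fin N → Fin M → ℝ, (∀ i j, s i j ∈ Set.Icc (0 : ℝ) 1) →
      ∀ i j, g s i j ∈ Set.Icc (0 : ℝ) 1)
    (C₁ : ℝ) (hC₁0 : 0 ≤ C₁) (hC₁ : C₁ < 1)
    (hg_contr : ∀ s s' : Fin N → Fin M → ℝ,
      (∀ i j, s i j ∈ Set.Icc (0 : ℝ) 1) → (∀ i j, s' i j ∈ Set.Icc (0 : ℝ) 1) →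
      ‖g s - g s'‖ ≤ C₁ * ‖s - s'‖)
    (sbar : Fin N → Fin M → ℝ)
    (hsbar_box : ∀ i j, sbar i j ∈ Set.Icc (0 : ℝ) 1)
    (hsbar_fix : g sbar = sbar) :
    (∀ s : Fin N → Fin M → ℝ, (∀ i j, s i j ∈ Set.Icc (0 : ℝ) 1) →
      ‖expUpdate β η g s - sbar‖ ≤ (1 - (η / M) * (1 - C₁)) * ‖s - sbar‖) ∧
    0 ≤ 1 - (η / M) * (1 - C₁) ∧ 1 - (η / M) * (1 - C₁) < 1 := by
  have hM1 : (1 : ℝ) ≤ M := by exact_mod_cast hM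
  have hM0 : (0 : ℝ) < M := by linarith
  have hηM0 : 0 < η / M := div_pos hη0 hM0
  have hηM1 : η / M ≤ 1 := by
    rw [div_le_one hM0]; linarith [hη.2]
  have hC0 : 0 ≤ 1 - (η / M) * (1 - C₁) := by nlinarith
  have hC1 : 1 - (η / M) * (1 - C₁) < 1 := by nlinarith
  refine ⟨fun s hs => ?_, hC0, hC1⟩
  set C := 1 - (η / M) * (1 - C₁) with hC
  set D := ‖s - sbar‖ with hD
  have hD0 : 0 ≤ D := norm_nonneg _
  have hgd : ‖g s - sbar‖ ≤ C₁ * D := by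
    have := hg_contr s sbar hs hsbar_box
    rwa [hsbar_fix] at this
  rw [pi_norm_le_iff_of_nonneg (mul_nonneg hC0 hD0)]
  intro i
  rw [pi_norm_le_iff_of_nonneg (mul_nonneg hC0 hD0)]
  intro j
  have hσ := hedge_bounds hM β η hη.1 hη.2 (s i) j
  set σ := hedge β η (s i) j with hσdef
  have h1 : |g s i j - sbar i j| ≤ C₁ * D := by
    have := (norm_le_pi_norm (g s - sbar) i)
    have h2 := (norm_le_pi_norm ((g s - sbar) i) j)
    simp only [Pi.sub_apply, Real.norm_eq_abs] at h2 this
    linarith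
  have h2 : |s i j - sbar i j| ≤ D := by
    have := (norm_le_pi_norm (s - sbar) i)
    have h2 := (norm_le_pi_norm ((s - sbar) i) j)
    simp only [Pi.sub_apply, Real.norm_eq_abs] at h2 this
    linarith
  have heq : (expUpdate β η g s - sbar) i j
      = σ * (g s i j - sbar i j) + (1 - σ) * (s i j - sbar i j) := by
    simp [expUpdate, hσdef]; ring
  rw [Real.norm_eq_abs, heq]
  have habs : |σ * (g s i j - sbar i j) + (1 - σ) * (s i j - sbar i j)|
      ≤ σ * (C₁ * D) + (1 - σ) * D := by
    calc |σ * (g s i j - sbar i j) + (1 - σ) * (s i j - sbar i j)|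
        ≤ |σ * (g s i j - sbar i j)| + |(1 - σ) * (s i j - sbar i j)| := abs_add_le _ _
      _ = σ * |g s i j - sbar i j| + (1 - σ) * |s i j - sbar i j| := by
          rw [abs_mul, abs_mul, abs_of_nonneg (by linarith [hσ.1] : (0:ℝ) ≤ σ),
            abs_of_nonneg (by linarith [hσ.2] : (0:ℝ) ≤ 1 - σ)]
      _ ≤ σ * (C₁ * D) + (1 - σ) * D := by
          have := hσ.1; have := hσ.2
          nlinarith
  refine habs.trans ?_
  have := hσ.1
  rw [hC]
  nlinarith [mul_nonneg (mul_nonneg (by linarith : (0:ℝ) ≤ σ - η / M) (by linarith : (0:ℝ) ≤ 1 - C₁)) hD0]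
end

section
/- For every agent i, every arm j, and every pair of state profiles s_a, s_b ∈ ℝ^{N×M}, the expected reward map satisfies |R_i(s_a, j) − R_i(s_b, j)| ≤ 4θ(1−η)β · ‖s_a − s_b‖_∞. Consequently, if the parameters satisfy 4θ(1−η)β < 1, then s ↦ R_i(s, j) is a ‖·‖_∞-contraction in the state profile. -/
open Finset

/-- Population profile: fraction of agents playing each arm. -/
noncomputable def popProfile {N M : ℕ} (a : Fin N → Fin M) (j : Fin M) : ℝ :=
  ((Finset.univ.filter (fun i => a i = j)).card : ℝ) / N

/-- Expected reward to agent `i` of playing arm `j`, given state profile `s`. -/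
noncomputable def expReward {N M : ℕ} (β η : ℝ) (r : (Fin M → ℝ) → Fin M → ℝ)
    (s : Fin N → Fin M → ℝ) (i : Fin N) (j : Fin M) : ℝ :=
  ∑ a : Fin N → Fin M,
    if a i = j then
      (∏ m ∈ Finset.univ.erase i, hedge β η (s m) (a m)) * r (popProfile a) j
    else 0

lemma frac_step (a b a' b' g ε : ℝ) (ha0 : 0 ≤ a) (hb0 : 0 ≤ b) (ha'0 : 0 ≤ a') (hb'0 : 0 ≤ b')
    (hg0 : 0 < g) (hg1 : 1 ≤ g) (habp : 0 < a + b) (hden2 : 0 < a' + b')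
    (haa' : a / g ≤ a') (hbb' : b' ≤ b * g) (hε : 0 ≤ ε) (hgε : g - 1 ≤ ε * (g + 1)) :
    a / (a + b) - a' / (a' + b') ≤ ε := by
  have hden3 : 0 < a + b * g ^ 2 := by nlinarith
  have hstep1 : a / (a + b * g ^ 2) ≤ a' / (a' + b') := by
    rw [div_le_div_iff₀ hden3 hden2]
    have ha2 : a ≤ a' * g := by rw [div_le_iff₀ hg0] at haa'; exact haa'
    have h := mul_le_mul ha2 hbb' hb'0 (mul_nonneg ha'0 hg0.le)
    nlinarith [h]
  have hstep2 : a / (a + b) - a / (a + b * g ^ 2) ≤ (g - 1) / (g + 1) := by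
    rw [div_sub_div _ _ habp.ne' hden3.ne', div_le_div_iff₀ (by positivity) (by positivity)]
    nlinarith [mul_nonneg (sub_nonneg.2 hg1) (sq_nonneg (a - b * g))]
  have hstep3 : (g - 1) / (g + 1) ≤ ε := by
    rw [div_le_iff₀ (by positivity)]
    linarith
  linarith

lemma softmax_l1 {M : ℕ} (hM : 1 ≤ M) (β : ℝ) (hβ : 0 < β) (s t : Fin M → ℝ) (δ : ℝ)
    (hδ : ∀ k, |s k - t k| ≤ δ) :
    ∑ k, |Real.exp (β * s k) / (∑ l, Real.exp (β * s l))
        - Real.exp (β * t k) / (∑ l, Real.exp (β * t l))| ≤ 2 * (β * δ) := by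
  haveI : Nonempty (Fin M) := ⟨⟨0, hM⟩⟩
  have hδ0 : 0 ≤ δ := le_trans (abs_nonneg _) (hδ (Classical.arbitrary _))
  set ε := β * δ with hεdef
  have hε : 0 ≤ ε := mul_nonneg hβ.le hδ0
  set g := Real.exp ε with hgdef
  have hg1 : 1 ≤ g := Real.one_le_exp hε
  have hg0 : 0 < g := Real.exp_pos _
  set Zs := ∑ l, Real.exp (β * s l) with hZs
  set Zt := ∑ l, Real.exp (β * t l) with hZt
  set p : Fin M → ℝ := fun k => Real.exp (β * s k) / Zs with hp
  set q : Fin M → ℝ := fun k => Real.exp (β * t k) / Zt with hq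
  have hZsp : 0 < Zs := Finset.sum_pos (fun k _ => Real.exp_pos _) Finset.univ_nonempty
  have hZtp : 0 < Zt := Finset.sum_pos (fun k _ => Real.exp_pos _) Finset.univ_nonempty
  -- pointwise exp comparisons
  have hst : ∀ k, Real.exp (β * s k) / g ≤ Real.exp (β * t k) := by
    intro k
    rw [div_le_iff₀ hg0, hgdef, ← Real.exp_add]
    apply Real.exp_le_exp.2
    have h1 := (abs_le.1 (hδ k)).2
    have h2 := mul_le_mul_of_nonneg_left h1 hβ.le
    rw [hεdef]; nlinarith
  have hts : ∀ k, Real.exp (β * t k) / g ≤ Real.exp (β * s k) := by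
    intro k
    rw [div_le_iff₀ hg0, hgdef, ← Real.exp_add]
    apply Real.exp_le_exp.2
    have h1 := (abs_le.1 (hδ k)).1
    have h2 := mul_le_mul_of_nonneg_left h1 hβ.le
    rw [hεdef]; nlinarith
  set A : Finset (Fin M) := univ.filter (fun k => q k < p k) with hA
  set a := ∑ k ∈ A, Real.exp (β * s k) with ha
  set b := ∑ k ∈ univ.filter (fun k => ¬ q k < p k), Real.exp (β * s k) with hb
  set a' := ∑ k ∈ A, Real.exp (β * t k) with ha'
  set b' := ∑ k ∈ univ.filter (fun k => ¬ q k < p k), Real.exp (β * t k) with hb'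
  have hab : a + b = Zs := by rw [ha, hb, hZs]; exact Finset.sum_filter_add_sum_filter_not _ _ _
  have hab' : a' + b' = Zt := by rw [ha', hb', hZt]; exact Finset.sum_filter_add_sum_filter_not _ _ _
  have ha0 : 0 ≤ a := Finset.sum_nonneg fun k _ => (Real.exp_pos _).le
  have hb0 : 0 ≤ b := Finset.sum_nonneg fun k _ => (Real.exp_pos _).le
  have ha'0 : 0 ≤ a' := Finset.sum_nonneg fun k _ => (Real.exp_pos _).le
  have hb'0 : 0 ≤ b' := Finset.sum_nonneg fun k _ => (Real.exp_pos _).le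
  have haa' : a / g ≤ a' := by
    rw [ha, ha', Finset.sum_div]; exact Finset.sum_le_sum fun k _ => hst k
  have hbb' : b' ≤ b * g := by
    rw [hb, hb', Finset.sum_mul]
    refine Finset.sum_le_sum fun k _ => ?_
    have := hts k
    rw [div_le_iff₀ hg0] at this
    linarith [this]
  have hb'low : b / g ≤ b' := by
    rw [hb, hb', Finset.sum_div]; exact Finset.sum_le_sum fun k _ => hst k
  -- sum of p and q over filters
  have hsum1 : ∑ k, p k = 1 := by
    rw [hp]; simp only [← Finset.sum_div]; rw [← hZs, div_self hZsp.ne']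
  have hsum2 : ∑ k, q k = 1 := by
    rw [hq]; simp only [← Finset.sum_div]; rw [← hZt, div_self hZtp.ne']
  -- reduce to the filter sum
  have habs : ∑ k, |p k - q k| = 2 * (∑ k ∈ A, (p k - q k)) := by
    rw [← Finset.sum_filter_add_sum_filter_not univ (fun k => q k < p k) (fun k => |p k - q k|)]
    have h1 : ∑ k ∈ A, |p k - q k| = ∑ k ∈ A, (p k - q k) := by
      apply Finset.sum_congr rfl; intro k hk
      rw [hA] at hk; exact abs_of_pos (sub_pos.2 (Finset.mem_filter.1 hk).2)
    have h2 : ∑ k ∈ univ.filter (fun k => ¬ q k < p k), |p k - q k|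
        = ∑ k ∈ univ.filter (fun k => ¬ q k < p k), (q k - p k) := by
      apply Finset.sum_congr rfl; intro k hk
      have := (Finset.mem_filter.1 hk).2
      rw [abs_sub_comm]; exact abs_of_nonneg (sub_nonneg.2 (not_lt.1 this))
    have h3 : (∑ k ∈ A, (p k - q k)) + ∑ k ∈ univ.filter (fun k => ¬ q k < p k), (p k - q k) = 0 := by
      rw [Finset.sum_filter_add_sum_filter_not univ (fun k => q k < p k) (fun k => p k - q k)]
      rw [Finset.sum_sub_distrib, hsum1, hsum2]; ring
    rw [h1, h2]
    have : ∑ k ∈ univ.filter (fun k => ¬ q k < p k), (q k - p k)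
        = - ∑ k ∈ univ.filter (fun k => ¬ q k < p k), (p k - q k) := by
      rw [← Finset.sum_neg_distrib]; apply Finset.sum_congr rfl; intros; ring
    rw [this]; linarith
  have hpa : ∑ k ∈ A, p k = a / Zs := by rw [hp, ha, Finset.sum_div]
  have hqa : ∑ k ∈ A, q k = a' / Zt := by rw [hq, ha', Finset.sum_div]
  have hgε : g - 1 ≤ ε * (g + 1) := by
    have h1 : 1 - ε ≤ Real.exp (-ε) := by linarith [Real.add_one_le_exp (-ε)]
    have h2 : g * Real.exp (-ε) = 1 := by rw [hgdef, ← Real.exp_add]; simp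
    nlinarith [mul_le_mul_of_nonneg_left h1 hg0.le, h2, hε, hg0]
  have hden2 : 0 < a' + b' := by
    have h : (a + b) / g ≤ a' + b' := by rw [add_div]; exact add_le_add haa' hb'low
    have h0 : 0 < (a + b) / g := div_pos (hab ▸ hZsp) hg0
    linarith
  have hmain : a / (a + b) - a' / (a' + b') ≤ ε :=
    frac_step a b a' b' g ε ha0 hb0 ha'0 hb'0 hg0 hg1 (hab ▸ hZsp) hden2 haa' hbb' hε hgε
  have hfin : ∑ k ∈ A, (p k - q k) ≤ ε := by
    rw [Finset.sum_sub_distrib, hpa, hqa, ← hab, ← hab']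
    exact hmain
  rw [habs]; linarith

lemma hedge_nonneg {M : ℕ} (β η : ℝ) (hη0 : 0 ≤ η) (hη1 : η ≤ 1) (s : Fin M → ℝ) (j : Fin M) :
    0 ≤ hedge β η s j := by
  unfold hedge
  have h1 : (0:ℝ) ≤ ∑ k, Real.exp (β * s k) :=
    Finset.sum_nonneg fun k _ => (Real.exp_pos _).le
  have h2 : (0:ℝ) ≤ 1 - η := by linarith
  have h3 : (0:ℝ) ≤ (M : ℝ) := Nat.cast_nonneg _
  positivity

lemma hedge_sum {M : ℕ} (hM : 1 ≤ M) (β η : ℝ) (s : Fin M → ℝ) :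
    ∑ j, hedge β η s j = 1 := by
  haveI : Nonempty (Fin M) := ⟨⟨0, hM⟩⟩
  have hZ : 0 < ∑ k, Real.exp (β * s k) :=
    Finset.sum_pos (fun k _ => Real.exp_pos _) Finset.univ_nonempty
  have hM0 : (M : ℝ) ≠ 0 := by positivity
  unfold hedge
  rw [Finset.sum_add_distrib]
  have h1 : ∑ j, (1 - η) * Real.exp (β * s j) / (∑ k, Real.exp (β * s k)) = 1 - η := by
    rw [← Finset.sum_div, ← Finset.mul_sum, mul_div_assoc, div_self hZ.ne', mul_one]
  have h2 : ∑ _j : Fin M, η / (M : ℝ) = η := by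
    rw [Finset.sum_const, card_univ, Fintype.card_fin, nsmul_eq_mul]
    field_simp
  rw [h1, h2]; ring

lemma hedge_l1 {M : ℕ} (hM : 1 ≤ M) (β η : ℝ) (hβ : 0 < β) (hη1 : η ≤ 1)
    (s t : Fin M → ℝ) (δ : ℝ) (hδ : ∀ k, |s k - t k| ≤ δ)
    (hsoft : ∑ k, |Real.exp (β * s k) / (∑ l, Real.exp (β * s l))
        - Real.exp (β * t k) / (∑ l, Real.exp (β * t l))| ≤ 2 * (β * δ)) :
    ∑ k, |hedge β η s k - hedge β η t k| ≤ 2 * (1 - η) * β * δ := by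
  have key : ∀ k, |hedge β η s k - hedge β η t k|
      = (1 - η) * |Real.exp (β * s k) / (∑ l, Real.exp (β * s l))
        - Real.exp (β * t k) / (∑ l, Real.exp (β * t l))| := by
    intro k
    have : hedge β η s k - hedge β η t k
        = (1 - η) * (Real.exp (β * s k) / (∑ l, Real.exp (β * s l))
          - Real.exp (β * t k) / (∑ l, Real.exp (β * t l))) := by
      unfold hedge; ring
    rw [this, abs_mul, abs_of_nonneg (by linarith : (0:ℝ) ≤ 1 - η)]
  calc ∑ k, |hedge β η s k - hedge β η t k|
      = (1 - η) * ∑ k, |Real.exp (β * s k) / (∑ l, Real.exp (β * s l))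
        - Real.exp (β * t k) / (∑ l, Real.exp (β * t l))| := by
        rw [Finset.mul_sum]; exact Finset.sum_congr rfl fun k _ => key k
    _ ≤ (1 - η) * (2 * (β * δ)) :=
        mul_le_mul_of_nonneg_left hsoft (by linarith)
    _ = 2 * (1 - η) * β * δ := by ring

lemma popProfile_nonneg {N M : ℕ} (a : Fin N → Fin M) (k : Fin M) : 0 ≤ popProfile a k := by
  unfold popProfile; positivity

lemma popProfile_sum {N M : ℕ} (hN : 1 ≤ N) (a : Fin N → Fin M) :
    ∑ k, popProfile a k = 1 := by
  have hN0 : (N : ℝ) ≠ 0 := by positivity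
  unfold popProfile
  rw [← Finset.sum_div, div_eq_one_iff_eq hN0]
  rw [← Nat.cast_sum]
  norm_cast
  rw [← Finset.card_eq_sum_card_fiberwise (fun x _ => Finset.mem_univ (a x))]
  simp

lemma popProfile_eq {N M : ℕ} (a : Fin N → Fin M) (k : Fin M) :
    popProfile a k = (∑ m, if a m = k then (1:ℝ) else 0) / N := by
  unfold popProfile
  congr 1
  rw [Finset.card_filter]
  push_cast
  rfl

lemma popProfile_update {N M : ℕ} (hN : 1 ≤ N) (a : Fin N → Fin M) (m0 : Fin N) (k₀ : Fin M) :
    ∑ k, |popProfile a k - popProfile (Function.update a m0 k₀) k| ≤ 2 / N := by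
  have hN0 : (0:ℝ) < N := by positivity
  have key : ∀ k, popProfile a k - popProfile (Function.update a m0 k₀) k
      = ((if a m0 = k then (1:ℝ) else 0) - (if k₀ = k then (1:ℝ) else 0)) / N := by
    intro k
    rw [popProfile_eq, popProfile_eq, div_sub_div_same]
    congr 1
    have hupd : (fun m => if Function.update a m0 k₀ m = k then (1:ℝ) else 0)
        = Function.update (fun m => if a m = k then (1:ℝ) else 0) m0
            (if k₀ = k then (1:ℝ) else 0) := by
      funext m
      by_cases h : m = m0
      · subst h; simp [Function.update_self]
      · simp [Function.update_of_ne h]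
    rw [hupd, Finset.sum_update_of_mem (Finset.mem_univ m0),
      ← Finset.add_sum_erase _ _ (Finset.mem_univ m0), Finset.erase_eq]
    ring
  calc ∑ k, |popProfile a k - popProfile (Function.update a m0 k₀) k|
      ≤ ∑ k, ((if a m0 = k then (1:ℝ) else 0) + (if k₀ = k then (1:ℝ) else 0)) / N := by
        refine Finset.sum_le_sum fun k _ => ?_
        rw [key k, abs_div, abs_of_pos hN0]
        gcongr
        split_ifs <;> norm_num
    _ = 2 / N := by
        rw [← Finset.sum_div]
        congr 1
        rw [Finset.sum_add_distrib]
        simp [Finset.sum_ite_eq]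
        norm_num
  

noncomputable def egen {N M : ℕ} (r : (Fin M → ℝ) → Fin M → ℝ) (i : Fin N) (j : Fin M)
    (W : Fin N → Fin M → ℝ) : ℝ :=
  ∑ a : Fin N → Fin M,
    if a i = j then (∏ m ∈ Finset.univ.erase i, W m (a m)) * r (popProfile a) j else 0

lemma sum_update_mul (N M : ℕ) (H : (Fin N → Fin M) → ℝ) (d : Fin M → ℝ)
    (hd : ∑ k, d k = 0) (m0 : Fin N) (k₀ : Fin M) :
    ∑ a : Fin N → Fin M, H (Function.update a m0 k₀) * d (a m0) = 0 := by
  rw [← Equiv.sum_comp (Equiv.funSplitAt m0 (Fin M)).symm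
      (fun a => H (Function.update a m0 k₀) * d (a m0)), Fintype.sum_prod_type]
  have key : ∀ (k : Fin M) (b : {m : Fin N // m ≠ m0} → Fin M),
      Function.update ((Equiv.funSplitAt m0 (Fin M)).symm (k, b)) m0 k₀
        = (Equiv.funSplitAt m0 (Fin M)).symm (k₀, b) := by
    intro k b; funext m
    by_cases h : m = m0 <;>
      simp [Function.update, h, Equiv.funSplitAt, Equiv.piSplitAt]
  have key2 : ∀ (k : Fin M) (b : {m : Fin N // m ≠ m0} → Fin M),
      ((Equiv.funSplitAt m0 (Fin M)).symm (k, b)) m0 = k := by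
    intro k b; simp [Equiv.funSplitAt, Equiv.piSplitAt]
  simp only [key, key2]
  rw [Finset.sum_comm]
  simp [← Finset.mul_sum, hd]

lemma egen_step {N M : ℕ} (hN : 1 ≤ N) (hM : 1 ≤ M) (θ : ℝ) (hθ : 0 ≤ θ)
    (r : (Fin M → ℝ) → Fin M → ℝ)
    (hr_lip : ∀ p q : Fin M → ℝ, (∀ j, 0 ≤ p j) → ∑ j, p j = 1 →
      (∀ j, 0 ≤ q j) → ∑ j, q j = 1 →
      ∀ j, |r p j - r q j| ≤ θ * ∑ k, |p k - q k|)
    (i : Fin N) (j : Fin M) (W W' : Fin N → Fin M → ℝ)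
    (hW0 : ∀ m k, 0 ≤ W m k) (hW1 : ∀ m, ∑ k, W m k = 1)
    (hW0' : ∀ m k, 0 ≤ W' m k) (hW1' : ∀ m, ∑ k, W' m k = 1)
    (m0 : Fin N) (heq : ∀ m, m ≠ m0 → W m = W' m) :
    |egen r i j W - egen r i j W'| ≤ (2 * θ / N) * ∑ k, |W m0 k - W' m0 k| := by
  have hN0 : (0:ℝ) < N := by positivity
  have hRHS0 : 0 ≤ (2 * θ / N) * ∑ k, |W m0 k - W' m0 k| := by
    apply mul_nonneg (by positivity)
    exact Finset.sum_nonneg fun k _ => abs_nonneg _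
  by_cases him : m0 = i
  · have : egen r i j W = egen r i j W' := by
      unfold egen
      refine Finset.sum_congr rfl fun a _ => ?_
      congr 1
      · congr 1
        refine Finset.prod_congr rfl fun m hm => ?_
        rw [heq m (by rw [him]; exact (Finset.mem_erase.1 hm).1)]
    rw [this, sub_self, abs_zero]; exact hRHS0
  · set k₀ : Fin M := ⟨0, hM⟩
    set d : Fin M → ℝ := fun k => W m0 k - W' m0 k with hddef
    have hd : ∑ k, d k = 0 := by
      rw [hddef, Finset.sum_sub_distrib, hW1, hW1']; ring
    have hm0i : m0 ∈ Finset.univ.erase i := Finset.mem_erase.2 ⟨him, Finset.mem_univ _⟩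
    set R : Finset (Fin N) := (Finset.univ.erase i).erase m0 with hRdef
    set P : (Fin N → Fin M) → ℝ := fun a => ∏ m ∈ R, W m (a m) with hPdef
    have hP0 : ∀ a, 0 ≤ P a := fun a => Finset.prod_nonneg fun m _ => hW0 m (a m)
    have hPupd : ∀ a, P (Function.update a m0 k₀) = P a := by
      intro a
      refine Finset.prod_congr rfl fun m hm => ?_
      rw [Function.update_of_ne (Finset.mem_erase.1 hm).1]
    -- Claim 1
    have claim1 : egen r i j W - egen r i j W'
        = ∑ a : Fin N → Fin M,
            if a i = j then P a * d (a m0) * r (popProfile a) j else 0 := by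
      unfold egen
      rw [← Finset.sum_sub_distrib]
      refine Finset.sum_congr rfl fun a _ => ?_
      by_cases h : a i = j
      · simp only [h, if_true]
        have e1 : ∏ m ∈ Finset.univ.erase i, W m (a m) = W m0 (a m0) * P a :=
          (Finset.mul_prod_erase _ _ hm0i).symm
        have e2 : ∏ m ∈ Finset.univ.erase i, W' m (a m) = W' m0 (a m0) * P a := by
          rw [← Finset.mul_prod_erase _ (fun m => W' m (a m)) hm0i]
          congr 1
          refine Finset.prod_congr rfl fun m hm => ?_
          rw [heq m (Finset.mem_erase.1 hm).1]
        rw [e1, e2, hddef]; ring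
      · simp [h]
    -- Claim 2
    have claim2 : ∑ a : Fin N → Fin M,
        (if a i = j then P a * d (a m0) * r (popProfile (Function.update a m0 k₀)) j else 0)
        = 0 := by
      calc ∑ a : Fin N → Fin M,
          (if a i = j then P a * d (a m0) * r (popProfile (Function.update a m0 k₀)) j else 0)
          = ∑ a : Fin N → Fin M,
            (fun b => if b i = j then P b * r (popProfile b) j else 0)
              (Function.update a m0 k₀) * d (a m0) := by
            refine Finset.sum_congr rfl fun a _ => ?_
            have hai : Function.update a m0 k₀ i = a i := Function.update_of_ne (Ne.symm him) _ _
            simp only [hai, hPupd a]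
            by_cases h : a i = j
            · simp only [h, if_true]; ring
            · simp [h]
        _ = 0 := sum_update_mul N M (fun b => if b i = j then P b * r (popProfile b) j else 0) d hd m0 k₀
    -- combine
    have hdiff : egen r i j W - egen r i j W'
        = ∑ a : Fin N → Fin M,
            if a i = j then P a * d (a m0)
              * (r (popProfile a) j - r (popProfile (Function.update a m0 k₀)) j) else 0 := by
      rw [claim1, ← sub_zero (∑ a : Fin N → Fin M,
        if a i = j then P a * d (a m0) * r (popProfile a) j else 0), ← claim2,
        ← Finset.sum_sub_distrib]
      refine Finset.sum_congr rfl fun a _ => ?_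
      by_cases h : a i = j <;> simp [h] <;> ring
    -- bound each term
    have hbound : ∀ a : Fin N → Fin M,
        |if a i = j then P a * d (a m0)
            * (r (popProfile a) j - r (popProfile (Function.update a m0 k₀)) j) else 0|
        ≤ (if a i = j then P a * |d (a m0)| else 0) * (θ * (2 / N)) := by
      intro a
      by_cases h : a i = j
      · simp only [h, if_true]
        rw [abs_mul, abs_mul, abs_of_nonneg (hP0 a)]
        have hb : |r (popProfile a) j - r (popProfile (Function.update a m0 k₀)) j|
            ≤ θ * (2 / N) := by
          calc |r (popProfile a) j - r (popProfile (Function.update a m0 k₀)) j|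
              ≤ θ * ∑ k, |popProfile a k - popProfile (Function.update a m0 k₀) k| :=
                hr_lip _ _ (popProfile_nonneg a) (popProfile_sum hN a)
                  (popProfile_nonneg _) (popProfile_sum hN _) j
            _ ≤ θ * (2 / N) := mul_le_mul_of_nonneg_left (popProfile_update hN a m0 k₀) hθ
        exact mul_le_mul_of_nonneg_left hb (mul_nonneg (hP0 a) (abs_nonneg _))
      · simp [h]
    -- Claim 3
    have claim3 : ∑ a : Fin N → Fin M, (if a i = j then P a * |d (a m0)| else 0)
        = ∑ k, |d k| := by
      set v : Fin N → Fin M → ℝ := fun m k =>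
        if m = i then (if k = j then 1 else 0) else if m = m0 then |d k| else W m k with hvdef
      have hprod : ∀ a : Fin N → Fin M,
          (if a i = j then P a * |d (a m0)| else 0) = ∏ m, v m (a m) := by
        intro a
        rw [← Finset.mul_prod_erase Finset.univ (fun m => v m (a m)) (Finset.mem_univ i),
          ← Finset.mul_prod_erase _ (fun m => v m (a m)) hm0i]
        have h1 : v i (a i) = if a i = j then 1 else 0 := by simp [hvdef]
        have h2 : v m0 (a m0) = |d (a m0)| := by simp [hvdef, him]
        have h3 : ∏ m ∈ R, v m (a m) = P a := by
          refine Finset.prod_congr rfl fun m hm => ?_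
          have hm1 := (Finset.mem_erase.1 hm).1
          have hm2 := (Finset.mem_erase.1 (Finset.mem_erase.1 hm).2).1
          simp [hvdef, hm1, hm2]
        rw [h1, h2, h3]
        by_cases h : a i = j
        · simp only [h, if_true]; ring
        · simp [h]
      rw [Finset.sum_congr rfl fun a _ => hprod a, ← Fintype.prod_sum]
      rw [← Finset.mul_prod_erase Finset.univ (fun m => ∑ k, v m k) (Finset.mem_univ i),
        ← Finset.mul_prod_erase _ (fun m => ∑ k, v m k) hm0i]
      have h1 : ∑ k, v i k = 1 := by
        simp only [hvdef, if_pos rfl]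
        rw [Finset.sum_ite_eq' Finset.univ j (fun _ => (1:ℝ))]
        simp
      have h2 : ∑ k, v m0 k = ∑ k, |d k| := by
        refine Finset.sum_congr rfl fun k _ => ?_
        simp [hvdef, him]
      have h3 : ∏ m ∈ R, ∑ k, v m k = 1 := by
        refine Finset.prod_eq_one fun m hm => ?_
        have hm1 := (Finset.mem_erase.1 hm).1
        have hm2 := (Finset.mem_erase.1 (Finset.mem_erase.1 hm).2).1
        have : ∀ k, v m k = W m k := fun k => by simp [hvdef, hm1, hm2]
        rw [Finset.sum_congr rfl fun k _ => this k]
        exact hW1 m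
      rw [h1, h2, h3]; ring
    calc |egen r i j W - egen r i j W'|
        ≤ ∑ a : Fin N → Fin M,
            |if a i = j then P a * d (a m0)
              * (r (popProfile a) j - r (popProfile (Function.update a m0 k₀)) j) else 0| := by
          rw [hdiff]; exact Finset.abs_sum_le_sum_abs _ _
      _ ≤ ∑ a : Fin N → Fin M,
            (if a i = j then P a * |d (a m0)| else 0) * (θ * (2 / N)) :=
          Finset.sum_le_sum fun a _ => hbound a
      _ = (∑ k, |d k|) * (θ * (2 / N)) := by rw [← Finset.sum_mul, claim3]
      _ = (2 * θ / N) * ∑ k, |W m0 k - W' m0 k| := by rw [hddef]; ring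

lemma egen_telescope {N M : ℕ} (hN : 1 ≤ N) (hM : 1 ≤ M) (θ : ℝ) (hθ : 0 ≤ θ)
    (r : (Fin M → ℝ) → Fin M → ℝ)
    (hr_lip : ∀ p q : Fin M → ℝ, (∀ j, 0 ≤ p j) → ∑ j, p j = 1 →
      (∀ j, 0 ≤ q j) → ∑ j, q j = 1 →
      ∀ j, |r p j - r q j| ≤ θ * ∑ k, |p k - q k|)
    (i : Fin N) (j : Fin M) (Wa Wb : Fin N → Fin M → ℝ)
    (hWa0 : ∀ m k, 0 ≤ Wa m k) (hWa1 : ∀ m, ∑ k, Wa m k = 1)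
    (hWb0 : ∀ m k, 0 ≤ Wb m k) (hWb1 : ∀ m, ∑ k, Wb m k = 1) :
    |egen r i j Wa - egen r i j Wb|
      ≤ ∑ m, (2 * θ / N) * ∑ k, |Wa m k - Wb m k| := by
  set mix : Finset (Fin N) → (Fin N → Fin M → ℝ) :=
    fun S m => if m ∈ S then Wa m else Wb m with hmixdef
  have hmix0 : ∀ S m k, 0 ≤ mix S m k := by
    intro S m k; by_cases h : m ∈ S <;> simp [hmixdef, h, hWa0 m k, hWb0 m k]
  have hmix1 : ∀ S m, ∑ k, mix S m k = 1 := by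
    intro S m; by_cases h : m ∈ S <;> simp [hmixdef, h, hWa1 m, hWb1 m]
  have hind : ∀ S : Finset (Fin N), |egen r i j (mix S) - egen r i j Wb|
      ≤ ∑ m ∈ S, (2 * θ / N) * ∑ k, |Wa m k - Wb m k| := by
    intro S
    induction S using Finset.induction_on with
    | empty =>
      have hm : mix ∅ = Wb := by funext m; simp [hmixdef]
      rw [hm]; simp
    | @insert m S hmS ih =>
      have heq : ∀ m', m' ≠ m → mix (insert m S) m' = mix S m' := by
        intro m' hm'
        simp only [hmixdef, Finset.mem_insert]
        by_cases h : m' ∈ S <;> simp [h, hm']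
      have hstep := egen_step hN hM θ hθ r hr_lip i j (mix (insert m S)) (mix S)
        (hmix0 _) (hmix1 _) (hmix0 _) (hmix1 _) m heq
      have hva : mix (insert m S) m = Wa m := by
        simp [hmixdef, Finset.mem_insert_self]
      have hvb : mix S m = Wb m := by simp [hmixdef, hmS]
      rw [hva, hvb] at hstep
      calc |egen r i j (mix (insert m S)) - egen r i j Wb|
          ≤ |egen r i j (mix (insert m S)) - egen r i j (mix S)|
            + |egen r i j (mix S) - egen r i j Wb| := abs_sub_le _ _ _
        _ ≤ (2 * θ / N) * (∑ k, |Wa m k - Wb m k|)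
            + ∑ m' ∈ S, (2 * θ / N) * ∑ k, |Wa m' k - Wb m' k| := add_le_add hstep ih
        _ = ∑ m' ∈ insert m S, (2 * θ / N) * ∑ k, |Wa m' k - Wb m' k| := by
            rw [Finset.sum_insert hmS]
  have huniv : mix univ = Wa := by funext m; simp [hmixdef]
  have := hind Finset.univ
  rwa [huniv] at this

/-- Theorem 4 of the paper: the expected reward map is
`4θ(1−η)β`-Lipschitz in the state profile with respect to `‖·‖_∞`; consequently,
if `4θ(1−η)β < 1` it is a `‖·‖_∞`-contraction. -/
theorem expReward_contraction {N M : ℕ} (hN : 1 ≤ N) (hM : 1 ≤ M)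
    (β η θ : ℝ) (hβ : 0 < β) (hη : η ∈ Set.Icc (0 : ℝ) 1) (hθ : 0 ≤ θ)
    (r : (Fin M → ℝ) → Fin M → ℝ)
    (hr_range : ∀ p : Fin M → ℝ, (∀ j, 0 ≤ p j) → ∑ j, p j = 1 →
      ∀ j, r p j ∈ Set.Icc (0 : ℝ) 1)
    (hr_lip : ∀ p q : Fin M → ℝ, (∀ j, 0 ≤ p j) → ∑ j, p j = 1 →
      (∀ j, 0 ≤ q j) → ∑ j, q j = 1 →
      ∀ j, |r p j - r q j| ≤ θ * ∑ k, |p k - q k|) :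
    (∀ (i : Fin N) (j : Fin M) (sa sb : Fin N → Fin M → ℝ),
      |expReward β η r sa i j - expReward β η r sb i j|
        ≤ 4 * θ * (1 - η) * β * ‖sa - sb‖) ∧
    (4 * θ * (1 - η) * β < 1 →
      ∀ (i : Fin N) (j : Fin M), ∃ C : ℝ, 0 ≤ C ∧ C < 1 ∧
        ∀ sa sb : Fin N → Fin M → ℝ,
          |expReward β η r sa i j - expReward β η r sb i j| ≤ C * ‖sa - sb‖) := by
  obtain ⟨hη0, hη1⟩ := hη
  have hN0 : (0:ℝ) < N := by positivity
  have main : ∀ (i : Fin N) (j : Fin M) (sa sb : Fin N → Fin M → ℝ),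
      |expReward β η r sa i j - expReward β η r sb i j|
        ≤ 4 * θ * (1 - η) * β * ‖sa - sb‖ := by
    intro i j sa sb
    set δ := ‖sa - sb‖ with hδdef
    have hδ0 : 0 ≤ δ := norm_nonneg _
    have hcoord : ∀ m k, |sa m k - sb m k| ≤ δ := by
      intro m k
      have h1 : ‖(sa - sb) m‖ ≤ ‖sa - sb‖ := norm_le_pi_norm (sa - sb) m
      have h2 : |(sa - sb) m k| ≤ ‖(sa - sb) m‖ := by
        have := norm_le_pi_norm ((sa - sb) m) k
        rwa [Real.norm_eq_abs] at this
      have h3 : (sa - sb) m k = sa m k - sb m k := by simp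
      rw [h3] at h2
      exact le_trans h2 h1
    have hexpa : expReward β η r sa i j = egen r i j (fun m => hedge β η (sa m)) := rfl
    have hexpb : expReward β η r sb i j = egen r i j (fun m => hedge β η (sb m)) := rfl
    rw [hexpa, hexpb]
    have htel := egen_telescope hN hM θ hθ r hr_lip i j
      (fun m => hedge β η (sa m)) (fun m => hedge β η (sb m))
      (fun m k => hedge_nonneg β η hη0 hη1 (sa m) k)
      (fun m => hedge_sum hM β η (sa m))
      (fun m k => hedge_nonneg β η hη0 hη1 (sb m) k)
      (fun m => hedge_sum hM β η (sb m))
    refine le_trans htel ?_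
    have hterm : ∀ m : Fin N,
        (2 * θ / N) * ∑ k, |hedge β η (sa m) k - hedge β η (sb m) k|
          ≤ (2 * θ / N) * (2 * (1 - η) * β * δ) := by
      intro m
      refine mul_le_mul_of_nonneg_left ?_ (by positivity)
      exact hedge_l1 hM β η hβ hη1 (sa m) (sb m) δ (hcoord m)
        (softmax_l1 hM β hβ (sa m) (sb m) δ (hcoord m))
    calc ∑ m, (2 * θ / N) * ∑ k, |hedge β η (sa m) k - hedge β η (sb m) k|
        ≤ ∑ _m : Fin N, (2 * θ / N) * (2 * (1 - η) * β * δ) :=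
          Finset.sum_le_sum fun m _ => hterm m
      _ = N * ((2 * θ / N) * (2 * (1 - η) * β * δ)) := by
          rw [Finset.sum_const, card_univ, Fintype.card_fin, nsmul_eq_mul]
      _ = 4 * θ * (1 - η) * β * δ := by field_simp; ring
  refine ⟨main, fun hC i j => ⟨4 * θ * (1 - η) * β, ?_, hC, fun sa sb => main i j sa sb⟩⟩
  have : 0 ≤ 1 - η := by linarith
  positivity
end

section
/- The Hedge policy is Lipschitz from the supremum norm to the ℓ1-norm with constant 2(1−η)β: for all x, y ∈ ℝ^M, ‖σ(x) − σ(y)‖₁ = Σ_{j=1}^M |σ(x,j) − σ(y,j)| ≤ 2(1−η)β · ‖x − y‖_∞, where ‖x − y‖_∞ = max_j |x(j) − y(j)|. -/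
/-!
Write `p = softmax (β • x)`, `q = softmax (β • y)` and `t = β ‖x - y‖`, so that every weight
`exp (β x j)` lies within a factor `exp (± t)` of `exp (β y j)`. The ℓ¹ distance of two
probability vectors is twice the excess mass `p S - q S` on the set `S` where `p > q`. Writing
`u, u'` and `v, v'` for the total weights of `S` and its complement, this excess is
`(u v' - v u') / ((u + u') (v + v'))`; the ratio bounds together with AM-GM bound it by
`(exp t - exp (-t)) / 4 ≤ t` for `t ≤ 1`, while for `t > 1` it is trivially at most `1 < t`.
-/

open Finset Real

lemma exp_sub_exp_neg_le_four_mul {t : ℝ} (ht₀ : 0 ≤ t) (ht₁ : t ≤ 1) :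
    exp t - exp (-t) ≤ 4 * t := by
  have hpos := abs_exp_sub_one_le (x := t) (by rwa [abs_of_nonneg ht₀])
  have hneg := abs_exp_sub_one_le (x := -t) (by rwa [abs_neg, abs_of_nonneg ht₀])
  rw [abs_of_nonneg ht₀] at hpos
  rw [abs_neg, abs_of_nonneg ht₀] at hneg
  linarith [(abs_le.1 hpos).2, (abs_le.1 hneg).1]

lemma four_mul_mul_sub_mul_le {k u u' v v' : ℝ} (hk : 1 ≤ k)
    (hu : 0 ≤ u) (hu' : 0 ≤ u') (hv : 0 ≤ v) (hv' : 0 ≤ v')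
    (huv : u ≤ k * v) (hvu' : v' ≤ k * u') :
    4 * (u * v' - v * u') ≤ (k - k⁻¹) * ((u + u') * (v + v')) := by
  set D := u * v' - v * u'
  have hc : 0 ≤ k ^ 2 - 1 := by nlinarith
  have hDv : k * D ≤ (k ^ 2 - 1) * (v * v') := by
    nlinarith [mul_le_mul_of_nonneg_left huv (by positivity : 0 ≤ k * v'),
      mul_le_mul_of_nonneg_left hvu' hv]
  have hDu : k * D ≤ (k ^ 2 - 1) * (u * u') := by
    nlinarith [mul_le_mul_of_nonneg_left hvu' (by positivity : 0 ≤ k * u),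
      mul_le_mul_of_nonneg_left huv hu']
  have hamgm : 16 * ((u * u') * (v * v')) ≤ ((u + u') * (v + v')) ^ 2 := by
    have h4u : 4 * (u * u') ≤ (u + u') ^ 2 := by nlinarith [sq_nonneg (u - u')]
    have h4v : 4 * (v * v') ≤ (v + v') ^ 2 := by nlinarith [sq_nonneg (v - v')]
    nlinarith [mul_le_mul h4u h4v (by positivity) (sq_nonneg (u + u'))]
  have hk_mul : k * (k - k⁻¹) = k ^ 2 - 1 := by field_simp
  suffices 4 * k * D ≤ (k ^ 2 - 1) * ((u + u') * (v + v')) by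
    rw [← hk_mul] at this
    nlinarith
  rcases le_or_gt D 0 with hD | hD
  · nlinarith [mul_nonneg hc (by positivity : 0 ≤ (u + u') * (v + v'))]
  · have hsq : (4 * k * D) ^ 2 ≤ ((k ^ 2 - 1) * ((u + u') * (v + v'))) ^ 2 := by
      have := mul_le_mul hDu hDv (by positivity) (by positivity)
      nlinarith [mul_le_mul_of_nonneg_left hamgm (sq_nonneg (k ^ 2 - 1))]
    exact le_of_pow_le_pow_left₀ two_ne_zero (by positivity) hsq

lemma sum_abs_sub_eq_two_mul_sum_posPart {ι : Type*} [Fintype ι] {p q : ι → ℝ}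
    (h : ∑ i, p i = ∑ i, q i) :
    ∑ i, |p i - q i| = 2 * ∑ i, (p i - q i)⁺ := by
  have habs : ∀ x : ℝ, |x| = 2 * x⁺ - x := fun x => by
    rw [← posPart_add_negPart]
    linarith [posPart_sub_negPart x]
  simp only [habs, sum_sub_distrib, ← mul_sum, h, sub_self, sub_zero]

lemma sum_posPart_eq_sum_filter {ι : Type*} [Fintype ι] (x : ι → ℝ) :
    ∑ i, (x i)⁺ = ∑ i with 0 < x i, x i := by
  rw [sum_filter]
  refine sum_congr rfl fun i _ => ?_
  split_ifs with hx
  · exact posPart_eq_self.2 hx.le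
  · exact posPart_eq_zero.2 (not_lt.1 hx)

section Softmax

variable {ι : Type*} [Fintype ι]

noncomputable def softmax (a : ι → ℝ) (i : ι) : ℝ :=
  exp (a i) / ∑ j, exp (a j)

lemma softmax_nonneg (a : ι → ℝ) (i : ι) : 0 ≤ softmax a i := by
  unfold softmax
  positivity

lemma sum_softmax [Nonempty ι] (a : ι → ℝ) : ∑ i, softmax a i = 1 := by
  unfold softmax
  rw [← sum_div, div_self (sum_pos (fun i _ => exp_pos (a i)) univ_nonempty).ne']

lemma sum_softmax_eq_div (a : ι → ℝ) (S : Finset ι) :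
    ∑ i ∈ S, softmax a i = (∑ i ∈ S, exp (a i)) / ∑ i, exp (a i) := by
  unfold softmax
  rw [sum_div]

lemma four_mul_sum_softmax_sub_le [Nonempty ι] {a b : ι → ℝ} {t : ℝ}
    (h : ∀ i, |a i - b i| ≤ t) (S : Finset ι) :
    4 * (∑ i ∈ S, softmax a i - ∑ i ∈ S, softmax b i) ≤ exp t - exp (-t) := by
  classical
  have hk : 1 ≤ exp t := one_le_exp ((abs_nonneg _).trans (h (Classical.arbitrary ι)))
  have hab : ∀ i, exp (a i) ≤ exp t * exp (b i) := fun i => by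
    rw [← exp_add]
    exact exp_le_exp.2 (by linarith [(abs_le.1 (h i)).2])
  have hba : ∀ i, exp (b i) ≤ exp t * exp (a i) := fun i => by
    rw [← exp_add]
    exact exp_le_exp.2 (by linarith [(abs_le.1 (h i)).1])
  have key := four_mul_mul_sub_mul_le hk
    (sum_nonneg fun i _ => (exp_pos (a i)).le) (sum_nonneg fun i _ => (exp_pos (a i)).le)
    (sum_nonneg fun i _ => (exp_pos (b i)).le) (sum_nonneg fun i _ => (exp_pos (b i)).le)
    (by rw [mul_sum]; exact sum_le_sum fun i (_ : i ∈ S) => hab i)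
    (by rw [mul_sum]; exact sum_le_sum fun i (_ : i ∈ Sᶜ) => hba i)
  have hA : 0 < ∑ i, exp (a i) := sum_pos (fun i _ => exp_pos (a i)) univ_nonempty
  have hB : 0 < ∑ i, exp (b i) := sum_pos (fun i _ => exp_pos (b i)) univ_nonempty
  rw [sum_softmax_eq_div, sum_softmax_eq_div, div_sub_div _ _ hA.ne' hB.ne', mul_div_assoc',
    div_le_iff₀ (mul_pos hA hB), exp_neg, ← sum_add_sum_compl S fun i => exp (a i),
    ← sum_add_sum_compl S fun i => exp (b i)]
  linarith

theorem sum_abs_softmax_sub_le [Nonempty ι] (a b : ι → ℝ) :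
    ∑ i, |softmax a i - softmax b i| ≤ 2 * ‖a - b‖ := by
  set t := ‖a - b‖
  have h : ∀ i, |a i - b i| ≤ t := fun i => norm_le_pi_norm (a - b) i
  rw [sum_abs_sub_eq_two_mul_sum_posPart (by rw [sum_softmax, sum_softmax])]
  suffices ∑ i, (softmax a i - softmax b i)⁺ ≤ t by linarith
  rcases le_or_gt t 1 with ht | ht
  · rw [sum_posPart_eq_sum_filter, sum_sub_distrib]
    linarith [four_mul_sum_softmax_sub_le h {i | 0 < softmax a i - softmax b i},
      exp_sub_exp_neg_le_four_mul (norm_nonneg (a - b)) ht]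
  · calc ∑ i, (softmax a i - softmax b i)⁺ ≤ ∑ i, softmax a i := sum_le_sum fun i _ => by
          rw [posPart_def]
          exact sup_le (sub_le_self _ (softmax_nonneg b i)) (softmax_nonneg a i)
      _ = 1 := sum_softmax a
      _ ≤ t := ht.le

end Softmax

lemma hedge_sub_hedge (β η : ℝ) {M : ℕ} (x y : Fin M → ℝ) (j : Fin M) :
    hedge β η x j - hedge β η y j = (1 - η) * (softmax (β • x) j - softmax (β • y) j) := by
  simp only [hedge, softmax, Pi.smul_apply, smul_eq_mul]
  ring

/-- the Hedge policy is Lipschitz from the supremum norm to the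
ℓ1-norm with constant `2(1−η)β`. -/
theorem hedge_lipschitz {M : ℕ} (hM : 1 ≤ M)
    (β η : ℝ) (hβ : 0 < β) (hη : η ∈ Set.Icc (0 : ℝ) 1)
    (x y : Fin M → ℝ) :
    ∑ j : Fin M, |hedge β η x j - hedge β η y j| ≤ 2 * (1 - η) * β * ‖x - y‖ := by
  have : Nonempty (Fin M) := ⟨⟨0, hM⟩⟩
  have hη₁ : 0 ≤ 1 - η := sub_nonneg.2 hη.2
  calc ∑ j, |hedge β η x j - hedge β η y j|
      = (1 - η) * ∑ j, |softmax (β • x) j - softmax (β • y) j| := by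
        simp only [hedge_sub_hedge, abs_mul, abs_of_nonneg hη₁, mul_sum]
    _ ≤ (1 - η) * (2 * ‖β • x - β • y‖) := by gcongr; exact sum_abs_softmax_sub_le _ _
    _ = 2 * (1 - η) * β * ‖x - y‖ := by
        rw [← smul_sub, norm_smul, Real.norm_of_nonneg hβ.le]
        ring
end
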